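/- arXiv:2306.06265 — 7 statements merged into one kernel-verified Lean document; each statement's English description precedes it below -/
import Mathlib

section
/- Let π^1 and π^2 be two Markov policies in an episodic MDP that differ only at a single step h0 (i.e., π^1_h = π^2_h for all h ≠ h0). Let π be the step mixture policy defined by π_h(a|s) = ρ·π^1_h(a|s) + (1−ρ)·π^2_h(a|s) for some ρ ∈ [0,1]. Then the occupancy measure of π satisfies d_h^π(s,a) = ρ·d_h^{π^1}(s,a) + (1−ρ)·d_h^{π^2}(s,a) for every step h and state-action pair (s,a). -/
open Finset

/-- Occupancy measure `d_h^π(s,a)` of a policy, with fixed initial state `s₁`: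
`d_1(s,a) = 1{s = s₁} π_1(a|s)` and
`d_{h+1}(s,a) = π_{h+1}(a|s) Σ_{s',a'} d_h(s',a') P_h(s|s',a')`. -/
noncomputable def occ {S A : Type*} [Fintype S] [Fintype A] [DecidableEq S]
    (s₁ : S) (P : ℕ → S → A → S → ℝ) (π : ℕ → S → A → ℝ) :
    ℕ → S → A → ℝ
  | 0, _, _ => 0
  | 1, s, a => (if s = s₁ then 1 else 0) * π 1 s a
  | (h + 2), s, a =>
      π (h + 2) s a * ∑ s', ∑ a', occ s₁ P π (h + 1) s' a' * P (h + 1) s' a' s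

/-- Occupancy measure at step `h` only depends on the policy at steps `≤ h`. -/
lemma occ_congr {S A : Type*} [Fintype S] [Fintype A] [DecidableEq S]
    (s₁ : S) (P : ℕ → S → A → S → ℝ) (π π' : ℕ → S → A → ℝ) :
    ∀ h, (∀ h', h' ≤ h → π h' = π' h') → occ s₁ P π h = occ s₁ P π' h := by
  intro h
  induction h using Nat.strong_induction_on with
  | _ h ih =>
    intro hagree
    match h with
    | 0 => funext s a; simp [occ]
    | 1 => funext s a; simp [occ, hagree 1 le_rfl]
    | (h + 2) =>
      funext s a
      simp only [occ]
      rw [hagree (h + 2) le_rfl,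
        ih (h + 1) (by omega) (fun h' hh' => hagree h' (by omega))]

/-- if `π¹` and `π²` differ only at step `h0`, the step mixture policy
`π = ρ π¹ + (1−ρ) π²` has occupancy measure
`d_h^π = ρ d_h^{π¹} + (1−ρ) d_h^{π²}` at every step and state-action pair. -/
theorem stmt1 {S A : Type*} [Fintype S] [Fintype A] [DecidableEq S]
    (s₁ : S) (P : ℕ → S → A → S → ℝ)
    (π1 π2 π : ℕ → S → A → ℝ) (h0 : ℕ) (ρ : ℝ)
    (hρ : 0 ≤ ρ ∧ ρ ≤ 1)
    (hdiff : ∀ h, h ≠ h0 → π1 h = π2 h)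
    (hmix : ∀ h s a, π h s a = ρ * π1 h s a + (1 - ρ) * π2 h s a) :
    ∀ h s a, occ s₁ P π h s a
      = ρ * occ s₁ P π1 h s a + (1 - ρ) * occ s₁ P π2 h s a := by
  intro h
  induction h using Nat.strong_induction_on with
  | _ h ih =>
    intro s a
    match h with
    | 0 => simp [occ]
    | 1 => simp only [occ]; rw [hmix]; ring
    | (h + 2) =>
      by_cases hne : h + 2 = h0
      · -- all steps ≤ h+1 agree across all three policies
        have e1 : occ s₁ P π (h + 1) = occ s₁ P π1 (h + 1) :=
          occ_congr s₁ P π π1 (h + 1) (fun h' hh' => funext fun s => funext fun a => by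
            rw [hmix, hdiff h' (by omega)]; ring)
        have e2 : occ s₁ P π2 (h + 1) = occ s₁ P π1 (h + 1) :=
          occ_congr s₁ P π2 π1 (h + 1) (fun h' hh' => (hdiff h' (by omega)).symm)
        simp only [occ, e1, e2]
        rw [hmix]; ring
      · have hS : ∀ s' a', occ s₁ P π (h + 1) s' a'
            = ρ * occ s₁ P π1 (h + 1) s' a' + (1 - ρ) * occ s₁ P π2 (h + 1) s' a' :=
          fun s' a' => ih (h + 1) (by omega) s' a'
        have hπ12 : π1 (h + 2) = π2 (h + 2) := hdiff (h + 2) hne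
        simp only [occ]
        rw [hmix, hπ12]
        have : (∑ s', ∑ a', occ s₁ P π (h + 1) s' a' * P (h + 1) s' a' s)
            = ρ * (∑ s', ∑ a', occ s₁ P π1 (h + 1) s' a' * P (h + 1) s' a' s)
            + (1 - ρ) * (∑ s', ∑ a', occ s₁ P π2 (h + 1) s' a' * P (h + 1) s' a' s) := by
          rw [Finset.mul_sum, Finset.mul_sum, ← Finset.sum_add_distrib]
          refine Finset.sum_congr rfl fun s' _ => ?_
          rw [Finset.mul_sum, Finset.mul_sum, ← Finset.sum_add_distrib]
          refine Finset.sum_congr rfl fun a' _ => ?_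
          rw [hS]; ring
        rw [this]; ring
end

section
/- Let p and q be two probability distributions on a finite set S and f, g : S → [0, b] functions bounded by b ≥ 0. Then Var_p(f) ≤ 2·Var_p(g) + 2b·E_p[|f − g|], and Var_q(f) ≤ Var_p(f) + 3b²·‖p − q‖₁. -/
open Finset

/-- Expectation of `f` under a distribution `p` on a finite set. -/
noncomputable def expec {S : Type*} [Fintype S] (p f : S → ℝ) : ℝ := ∑ s, p s * f s

/-- Variance of `f` under `p`. -/
noncomputable def varp {S : Type*} [Fintype S] (p f : S → ℝ) : ℝ :=
  ∑ s, p s * (f s - expec p f) ^ 2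

/-- `p` is a probability vector on a finite set. -/
def IsProbVec {S : Type*} [Fintype S] (p : S → ℝ) : Prop :=
  (∀ s, 0 ≤ p s) ∧ ∑ s, p s = 1

/-- Variance is the minimum of `E[(f-c)^2]` over `c`. -/
lemma var_le_sq {S : Type*} [Fintype S] (p f : S → ℝ) (hp : IsProbVec p) (c : ℝ) :
    varp p f ≤ ∑ s, p s * (f s - c)^2 := by
  have hE : expec p f = ∑ s, p s * f s := rfl
  have h1 : ∑ s, p s * (f s - c)^2 =
      varp p f + 2*(expec p f - c) * (∑ s, p s * f s)
        + (c^2 - (expec p f)^2) * (∑ s, p s) := by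
    unfold varp
    rw [Finset.mul_sum, Finset.mul_sum, ← Finset.sum_add_distrib, ← Finset.sum_add_distrib]
    exact Finset.sum_congr rfl fun s _ => by ring
  rw [h1, hp.2, ← hE]
  nlinarith [sq_nonneg (expec p f - c)]

lemma expec_mem {S : Type*} [Fintype S] (p f : S → ℝ) (b : ℝ)
    (hp : IsProbVec p) (hf : ∀ s, 0 ≤ f s ∧ f s ≤ b) :
    0 ≤ expec p f ∧ expec p f ≤ b := by
  constructor
  · exact Finset.sum_nonneg fun s _ => mul_nonneg (hp.1 s) (hf s).1
  · calc expec p f ≤ ∑ s, p s * b :=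
          Finset.sum_le_sum fun s _ => mul_le_mul_of_nonneg_left (hf s).2 (hp.1 s)
      _ = b := by rw [← Finset.sum_mul, hp.2, one_mul]

/-- for `f, g : S → [0,b]`,
`Var_p(f) ≤ 2 Var_p(g) + 2b E_p[|f − g|]` and `Var_q(f) ≤ Var_p(f) + 3b² ‖p − q‖₁`. -/
theorem stmt6 {S : Type*} [Fintype S] (p q f g : S → ℝ) (b : ℝ)
    (hp : IsProbVec p) (hq : IsProbVec q) (hb : 0 ≤ b)
    (hf : ∀ s, 0 ≤ f s ∧ f s ≤ b) (hg : ∀ s, 0 ≤ g s ∧ g s ≤ b) :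
    varp p f ≤ 2 * varp p g + 2 * b * expec p (fun s => |f s - g s|) ∧
    varp q f ≤ varp p f + 3 * b ^ 2 * ∑ s, |p s - q s| := by
  have hfg : ∀ s, |f s - g s| ≤ b := by
    intro s
    rw [abs_le]
    constructor <;> [linarith [(hf s).1, (hg s).2]; linarith [(hf s).2, (hg s).1]]
  constructor
  · have h1 : varp p f ≤ ∑ s, p s * (f s - expec p g)^2 := var_le_sq p f hp _
    have h2 : ∑ s, p s * (f s - expec p g)^2 ≤
        ∑ s, (2 * (p s * (g s - expec p g)^2) + 2 * b * (p s * |f s - g s|)) := by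
      apply Finset.sum_le_sum
      intro s _
      have hps := hp.1 s
      have h3 : (f s - expec p g)^2 ≤ 2 * (g s - expec p g)^2 + 2 * b * |f s - g s| := by
        have hsq : (f s - g s)^2 ≤ b * |f s - g s| := by
          rw [← sq_abs]
          nlinarith [abs_nonneg (f s - g s), hfg s]
        nlinarith [sq_nonneg (f s - g s - (g s - expec p g))]
      nlinarith [abs_nonneg (f s - g s), mul_le_mul_of_nonneg_left h3 hps]
    calc varp p f ≤ _ := h1.trans h2
      _ = 2 * varp p g + 2 * b * expec p (fun s => |f s - g s|) := by
        rw [Finset.sum_add_distrib, ← Finset.mul_sum, ← Finset.mul_sum]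
        rfl
  · have hEf := expec_mem p f b hp hf
    have h1 : varp q f ≤ ∑ s, q s * (f s - expec p f)^2 := var_le_sq q f hq _
    have h2 : ∑ s, q s * (f s - expec p f)^2 ≤
        ∑ s, (p s * (f s - expec p f)^2 + |p s - q s| * b^2) := by
      apply Finset.sum_le_sum
      intro s _
      have hd : (f s - expec p f)^2 ≤ b^2 := by
        nlinarith [(hf s).1, (hf s).2, hEf.1, hEf.2]
      have habs : q s - p s ≤ |p s - q s| := by
        rw [abs_sub_comm]; exact le_abs_self _
      nlinarith [hq.1 s, hp.1 s, sq_nonneg (f s - expec p f), abs_nonneg (p s - q s),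
        mul_le_mul_of_nonneg_left hd (abs_nonneg (p s - q s))]
    have h3 : 0 ≤ ∑ s, |p s - q s| := Finset.sum_nonneg fun s _ => abs_nonneg _
    calc varp q f ≤ _ := h1.trans h2
      _ = varp p f + b^2 * ∑ s, |p s - q s| := by
        rw [Finset.sum_add_distrib, ← Finset.sum_mul, mul_comm]
        rfl
      _ ≤ varp p f + 3 * b^2 * ∑ s, |p s - q s| := by nlinarith [sq_nonneg b]
end

section
/- For any state-action pair (s,a), step h, and any subset N of episode indices {1,...,K}, Σ_{k∈N} d_h^k(s,a) / max(n̄_h^k(s,a), 1) ≤ 4·log(|N| + 1), where d_h^k is the occupancy measure of the policy executed in episode k and n̄_h^k(s,a) = Σ_{τ=1}^{k−1} d_h^τ(s,a) is the expected cumulative visitation count before episode k. -/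
open Finset

private lemma half_le_log (t : ℝ) (h0 : 0 ≤ t) (h1 : t ≤ 1) :
    t / 2 ≤ Real.log (1 + t) := by
  rw [Real.le_log_iff_exp_le (by linarith)]
  have h2 : (0:ℝ) < 1 - t / 2 := by linarith
  have := Real.add_one_le_exp (-(t/2))
  have hinv : Real.exp (t/2) ≤ 1 / (1 - t/2) := by
    rw [le_div_iff₀ h2]
    have hpos := Real.exp_pos (t/2)
    calc Real.exp (t/2) * (1 - t/2) ≤ Real.exp (t/2) * Real.exp (-(t/2)) :=
          mul_le_mul_of_nonneg_left (by linarith) hpos.le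
      _ = 1 := by rw [← Real.exp_add]; simp
  have : 1 / (1 - t/2) ≤ 1 + t := by
    rw [div_le_iff₀ h2]; nlinarith
  linarith

private lemma telescope (f : ℕ → ℝ) (N : Finset ℕ) :
    ∑ k ∈ N, (Real.log ((∑ τ ∈ N.filter (· < k), f τ) + f k + 1)
        - Real.log ((∑ τ ∈ N.filter (· < k), f τ) + 1))
      = Real.log ((∑ τ ∈ N, f τ) + 1) := by
  induction N using Finset.strongInduction with
  | _ N ih =>
    rcases N.eq_empty_or_nonempty with rfl | hne
    · simp
    · set M := N.max' hne with hM
      have hMmem : M ∈ N := N.max'_mem hne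
      have hsub : N.erase M ⊂ N := Finset.erase_ssubset hMmem
      have hfiltM : N.filter (· < M) = N.erase M := by
        ext x
        simp only [Finset.mem_filter, Finset.mem_erase]
        constructor
        · rintro ⟨hx, hlt⟩; exact ⟨Nat.ne_of_lt hlt, hx⟩
        · rintro ⟨hne', hx⟩
          exact ⟨hx, lt_of_le_of_ne (N.le_max' x hx) hne'⟩
      have hfilt : ∀ k ∈ N.erase M, N.filter (· < k) = (N.erase M).filter (· < k) := by
        intro k hk
        ext x
        simp only [Finset.mem_filter, Finset.mem_erase]
        constructor
        · rintro ⟨hx, hlt⟩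
          refine ⟨⟨?_, hx⟩, hlt⟩
          rintro rfl
          exact absurd (lt_of_lt_of_le hlt (N.le_max' k (Finset.mem_of_mem_erase hk))) (lt_irrefl _)
        · rintro ⟨⟨_, hx⟩, hlt⟩; exact ⟨hx, hlt⟩
      rw [← Finset.sum_erase_add N _ hMmem]
      have hsum : ∑ τ ∈ N, f τ = (∑ τ ∈ N.erase M, f τ) + f M :=
        (Finset.sum_erase_add N f hMmem).symm
      rw [Finset.sum_congr rfl (fun k hk => by rw [hfilt k hk]), ih _ hsub, hfiltM, hsum]
      ring

/-- for any state-action pair `(s,a)`, step `h`, and subset `N ⊆ {1,…,K}` of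
episodes, `Σ_{k∈N} d_h^k(s,a) / max(n̄_h^k(s,a), 1) ≤ 4 log(|N| + 1)`, where
`d_h^k ∈ [0,1]` is the occupancy measure of the policy executed in episode `k` and
`n̄_h^k(s,a) = Σ_{τ=1}^{k−1} d_h^τ(s,a)` is the expected cumulative visitation count. -/
theorem stmt8 {S A : Type*} [Fintype S] [Fintype A]
    (K : ℕ) (h : ℕ) (s : S) (a : A)
    (d : ℕ → ℕ → S → A → ℝ)
    (hd : ∀ k h s a, 0 ≤ d k h s a ∧ d k h s a ≤ 1)
    (N : Finset ℕ) (hN : N ⊆ Finset.Icc 1 K) :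
    ∑ k ∈ N, d k h s a / max (∑ τ ∈ Finset.Ico 1 k, d τ h s a) 1
      ≤ 4 * Real.log (N.card + 1) := by
  set f : ℕ → ℝ := fun τ => d τ h s a with hf
  have hf0 : ∀ τ, 0 ≤ f τ := fun τ => (hd τ h s a).1
  have hf1 : ∀ τ, f τ ≤ 1 := fun τ => (hd τ h s a).2
  have key : ∀ k ∈ N,
      f k / max (∑ τ ∈ Finset.Ico 1 k, f τ) 1
        ≤ 4 * (Real.log ((∑ τ ∈ N.filter (· < k), f τ) + f k + 1)
            - Real.log ((∑ τ ∈ N.filter (· < k), f τ) + 1)) := by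
    intro k hk
    set m := ∑ τ ∈ N.filter (· < k), f τ with hm
    set n := ∑ τ ∈ Finset.Ico 1 k, f τ with hn
    have hm0 : 0 ≤ m := Finset.sum_nonneg fun τ _ => hf0 τ
    have hmn : m ≤ n := by
      apply Finset.sum_le_sum_of_subset_of_nonneg
      · intro τ hτ
        simp only [Finset.mem_filter] at hτ
        have := hN hτ.1
        simp only [Finset.mem_Icc] at this
        exact Finset.mem_Ico.mpr ⟨this.1, hτ.2⟩
      · exact fun τ _ _ => hf0 τ
    have hmax : (m + 1) / 2 ≤ max n 1 := by
      rcases le_total m 1 with hc | hc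
      · calc (m+1)/2 ≤ 1 := by linarith
          _ ≤ max n 1 := le_max_right _ _
      · calc (m+1)/2 ≤ m := by linarith
          _ ≤ n := hmn
          _ ≤ max n 1 := le_max_left _ _
    have hmaxpos : (0:ℝ) < max n 1 := lt_of_lt_of_le (by linarith) hmax
    have hstep1 : f k / max n 1 ≤ 2 * f k / (m + 1) := by
      rw [div_le_div_iff₀ hmaxpos (by linarith)]
      nlinarith [hf0 k, hmax]
    have hlogeq : Real.log (m + f k + 1) - Real.log (m + 1)
        = Real.log (1 + f k / (m + 1)) := by
      rw [← Real.log_div (by nlinarith [hf0 k]) (by nlinarith)]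
      congr 1
      field_simp
      ring
    have ht0 : 0 ≤ f k / (m + 1) := div_nonneg (hf0 k) (by linarith)
    have ht1 : f k / (m + 1) ≤ 1 := by
      rw [div_le_one (by linarith)]
      linarith [hf1 k]
    have := half_le_log _ ht0 ht1
    rw [hlogeq]
    calc f k / max n 1 ≤ 2 * f k / (m + 1) := hstep1
      _ = 4 * (f k / (m+1) / 2) := by ring
      _ ≤ 4 * Real.log (1 + f k / (m + 1)) := by linarith
  calc ∑ k ∈ N, f k / max (∑ τ ∈ Finset.Ico 1 k, f τ) 1
      ≤ ∑ k ∈ N, 4 * (Real.log ((∑ τ ∈ N.filter (· < k), f τ) + f k + 1)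
            - Real.log ((∑ τ ∈ N.filter (· < k), f τ) + 1)) :=
        Finset.sum_le_sum key
    _ = 4 * Real.log ((∑ τ ∈ N, f τ) + 1) := by
        rw [← Finset.mul_sum, telescope]
    _ ≤ 4 * Real.log (N.card + 1) := by
        have hsum : (∑ τ ∈ N, f τ) ≤ N.card := by
          calc (∑ τ ∈ N, f τ) ≤ ∑ τ ∈ N, (1:ℝ) := Finset.sum_le_sum fun τ _ => hf1 τ
            _ = N.card := by simp
        have h0 : (0:ℝ) < (∑ τ ∈ N, f τ) + 1 := by
          have : 0 ≤ ∑ τ ∈ N, f τ := Finset.sum_nonneg fun τ _ => hf0 τ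
          linarith
        gcongr
end

section
/- Let (F_t)_{t≥1} be a filtration and (X_t)_{t≥1} a sequence of Bernoulli random variables with P[X_t = 1 | F_{t−1}] = p_t, where p_t is F_{t−1}-measurable. Then for any δ > 0, the probability that there exists n with Σ_{t=1}^n X_t < (1/2)·Σ_{t=1}^n p_t − log(1/δ) is at most δ. -/
/-!
Put `c = 1 - e⁻¹`, so that `e^{-x} = 1 - c x` for `x ∈ {0, 1}`. Then
`E[e^{c p_t - X_t} | F_{t-1}] = e^{c p_t} (1 - c p_t) ≤ 1`, so
`M_n = exp (c Σ_{t ≤ n} p_t - Σ_{t ≤ n} X_t)` is a nonnegative supermartingale with `M_0 = 1`, and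
Ville's inequality gives `P(∃ n, M_n ≥ 1/δ) ≤ δ`. Since `c > 1/2` and `p_t ≥ 0`, the event
`Σ X_t < (Σ p_t)/2 - log (1/δ)` forces `M_n > 1/δ`.
-/

open MeasureTheory Filter Finset

namespace MeasureTheory.Supermartingale

variable {Ω : Type*} {m0 : MeasurableSpace Ω} {μ : Measure Ω} [IsFiniteMeasure μ]
  {ℱ : Filtration ℕ m0} {M : ℕ → Ω → ℝ}

theorem maximal_ineq (hM : Supermartingale M ℱ μ) (hnonneg : ∀ n ω, 0 ≤ M n ω) (ε : ℝ)
    (n : ℕ) :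
    ENNReal.ofReal ε * μ {ω | ∃ k ≤ n, ε ≤ M k ω} ≤ ENNReal.ofReal (∫ ω, M 0 ω ∂μ) := by
  set τ : Ω → WithTop ℕ := fun ω ↦ (hittingBtwn M (Set.Ici ε) 0 n ω : ℕ)
  have hτ : IsStoppingTime ℱ τ :=
    hM.stronglyAdapted.adapted.isStoppingTime_hittingBtwn measurableSet_Ici
  have hτn : ∀ ω, τ ω ≤ n := fun ω ↦ WithTop.coe_le_coe.2 (hittingBtwn_le ω)
  have hsub : {ω | ∃ k ≤ n, ε ≤ M k ω} ⊆ {ω | ε ≤ stoppedValue M τ ω} :=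
    fun ω ⟨k, hk, hkε⟩ ↦ stoppedValue_hittingBtwn_mem ⟨k, ⟨k.zero_le, hk⟩, hkε⟩
  have hstop : ∫ ω, stoppedValue M τ ω ∂μ ≤ ∫ ω, M 0 ω ∂μ := by
    have := hM.neg.expected_stoppedValue_mono (isStoppingTime_const ℱ 0) hτ
      (fun ω ↦ WithTop.coe_le_coe.2 (hittingBtwn M (Set.Ici ε) 0 n ω).zero_le) hτn
    change ∫ ω, -M 0 ω ∂μ ≤ ∫ ω, -stoppedValue M τ ω ∂μ at this
    rw [integral_neg, integral_neg] at this
    exact neg_le_neg_iff.1 this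
  rcases le_or_gt ε 0 with hε | hε
  · simp [ENNReal.ofReal_of_nonpos hε]
  have hmarkov := mul_meas_ge_le_integral_of_nonneg (Eventually.of_forall fun ω ↦ hnonneg _ ω)
    (integrable_stoppedValue ℕ hτ hM.integrable hτn) ε
  have hreal : ε * μ.real {ω | ∃ k ≤ n, ε ≤ M k ω} ≤ ∫ ω, M 0 ω ∂μ :=
    ((mul_le_mul_iff_right₀ hε).2 (measureReal_mono hsub)).trans (hmarkov.trans hstop)
  rw [← ENNReal.ofReal_toReal (measure_ne_top μ _), ← ENNReal.ofReal_mul hε.le]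
  exact ENNReal.ofReal_le_ofReal hreal

theorem ville_ineq (hM : Supermartingale M ℱ μ) (hnonneg : ∀ n ω, 0 ≤ M n ω) (ε : ℝ) :
    ENNReal.ofReal ε * μ {ω | ∃ n, ε ≤ M n ω} ≤ ENNReal.ofReal (∫ ω, M 0 ω ∂μ) := by
  have hunion : {ω | ∃ n, ε ≤ M n ω} = ⋃ n, {ω | ∃ k ≤ n, ε ≤ M k ω} := by
    ext ω
    simp only [Set.mem_ofPred_eq, Set.mem_iUnion]
    exact ⟨fun ⟨n, hn⟩ ↦ ⟨n, n, le_rfl, hn⟩, fun ⟨_, k, _, hk⟩ ↦ ⟨k, hk⟩⟩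
  have hmono : Monotone fun n ↦ {ω | ∃ k ≤ n, ε ≤ M k ω} :=
    fun _ _ hab _ ⟨k, hk, hkε⟩ ↦ ⟨k, hk.trans hab, hkε⟩
  rw [hunion, hmono.measure_iUnion, ENNReal.mul_iSup]
  exact iSup_le (hM.maximal_ineq hnonneg ε)

end MeasureTheory.Supermartingale

open Real

lemma Real.exp_mul_one_sub_le_one (x : ℝ) : exp x * (1 - x) ≤ 1 := by
  calc exp x * (1 - x) ≤ exp x * exp (-x) := by
        gcongr; linarith [add_one_le_exp (-x)]
    _ = 1 := by rw [← exp_add, add_neg_cancel, exp_zero]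

lemma Real.exp_neg_of_eq_zero_or_eq_one {x : ℝ} (hx : x = 0 ∨ x = 1) :
    exp (-x) = 1 - (1 - exp (-1)) * x := by
  rcases hx with rfl | rfl <;> simp

lemma mem_Icc_of_eq_zero_or_eq_one {x : ℝ} (hx : x = 0 ∨ x = 1) : x ∈ Set.Icc 0 1 := by
  rcases hx with rfl | rfl <;> simp

section Bernoulli

variable {Ω : Type*} {m m0 : MeasurableSpace Ω} {μ : Measure Ω} {G Y q : Ω → ℝ}

lemma ae_mem_Icc_of_condExp_ae_eq (hY : ∀ ω, Y ω ∈ Set.Icc 0 1) (hYq : μ[Y|m] =ᵐ[μ] q) :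
    ∀ᵐ ω ∂μ, q ω ∈ Set.Icc 0 1 := by
  filter_upwards [condExp_nonneg (m := m) (Eventually.of_forall fun ω ↦ (hY ω).1),
    condExp_le_nonneg_const (m := m) zero_le_one (Eventually.of_forall fun ω ↦ (hY ω).2),
    hYq] with ω h0 h1 hq
  exact hq ▸ ⟨h0, h1⟩

theorem condExp_mul_exp_neg_of_eq_zero_or_eq_one (hm : m ≤ m0) [SigmaFinite (μ.trim hm)]
    (hG : StronglyMeasurable[m] G) (hGint : Integrable G μ) (hY01 : ∀ ω, Y ω = 0 ∨ Y ω = 1) (hYint : Integrable Y μ)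
    (hYq : μ[Y|m] =ᵐ[μ] q) :
    μ[fun ω ↦ G ω * exp (-Y ω)|m] =ᵐ[μ] fun ω ↦ G ω * (1 - (1 - exp (-1)) * q ω) := by
  have hGY : Integrable (G * Y) μ := hGint.mul_bdd hYint.aestronglyMeasurable
    (c := 1) (Eventually.of_forall fun ω ↦ by rcases hY01 ω with h | h <;> simp [h])
  have hlin : (fun ω ↦ G ω * exp (-Y ω)) = G - (1 - exp (-1)) • (G * Y) := by
    ext ω
    simp only [exp_neg_of_eq_zero_or_eq_one (hY01 ω), Pi.sub_apply, Pi.smul_apply, Pi.mul_apply,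
      smul_eq_mul]
    ring
  rw [hlin]
  filter_upwards [condExp_sub (m := m) hGint (hGY.smul (1 - exp (-1))),
    condExp_smul (m := m) (1 - exp (-1)) (G * Y),
    condExp_mul_of_stronglyMeasurable_left hG hGY hYint, hYq] with ω hsub hsmul hmul hq
  rw [hsub, Pi.sub_apply, hsmul, Pi.smul_apply, hmul, condExp_of_stronglyMeasurable hm hG hGint,
    Pi.mul_apply, hq, smul_eq_mul]
  ring

end Bernoulli

section LowerTailProcess

variable {Ω : Type*} {m0 : MeasurableSpace Ω} {μ : Measure Ω} {ℱ : Filtration ℕ m0}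
  {X p : ℕ → Ω → ℝ}

noncomputable def lowerTailProcess (X p : ℕ → Ω → ℝ) (n : ℕ) (ω : Ω) : ℝ :=
  exp ((1 - exp (-1)) * ∑ t ∈ Icc 1 n, p t ω - ∑ t ∈ Icc 1 n, X t ω)

@[simp]
lemma lowerTailProcess_zero : lowerTailProcess X p 0 = 1 := by
  ext ω
  simp [lowerTailProcess]

lemma lowerTailProcess_pos (n : ℕ) (ω : Ω) : 0 < lowerTailProcess X p n ω :=
  exp_pos _

lemma lowerTailProcess_succ (n : ℕ) (ω : Ω) :
    lowerTailProcess X p (n + 1) ω =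
      lowerTailProcess X p n ω * exp ((1 - exp (-1)) * p (n + 1) ω) * exp (-X (n + 1) ω) := by
  simp only [lowerTailProcess, sum_Icc_succ_top (Nat.le_add_left 1 n), ← exp_add]
  ring_nf

lemma lowerTailProcess_le_exp {n : ℕ} {ω : Ω} (hX : ∀ t, 0 ≤ X t ω)
    (hp : ∀ t ∈ Icc 1 n, p t ω ≤ 1) : lowerTailProcess X p n ω ≤ exp ((1 - exp (-1)) * n) := by
  have hP : ∑ t ∈ Icc 1 n, p t ω ≤ n := by
    simpa using sum_le_sum hp
  have hS : 0 ≤ ∑ t ∈ Icc 1 n, X t ω := sum_nonneg fun t _ ↦ hX t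
  have hc : 0 < 1 - exp (-1) := by linarith [exp_neg_one_lt_half]
  unfold lowerTailProcess
  gcongr
  nlinarith

lemma inv_le_lowerTailProcess {δ : ℝ} (hδ : 0 < δ) {n : ℕ} {ω : Ω}
    (hp : 0 ≤ ∑ t ∈ Icc 1 n, p t ω)
    (hlt : ∑ t ∈ Icc 1 n, X t ω < (∑ t ∈ Icc 1 n, p t ω) / 2 - log (1 / δ)) :
    1 / δ ≤ lowerTailProcess X p n ω := by
  rw [← exp_log (one_div_pos.2 hδ)]
  unfold lowerTailProcess
  gcongr
  nlinarith [exp_neg_one_lt_half]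

lemma stronglyAdapted_lowerTailProcess (hX : Adapted ℱ X)
    (hp : ∀ t, 1 ≤ t → StronglyMeasurable[ℱ (t - 1)] (p t)) :
    StronglyAdapted ℱ (lowerTailProcess X p) := by
  intro n
  have hP : StronglyMeasurable[ℱ n] fun ω ↦ ∑ t ∈ Icc 1 n, p t ω :=
    stronglyMeasurable_fun_sum _ fun t ht ↦
      (hp t (mem_Icc.1 ht).1).mono (ℱ.mono (by have := (mem_Icc.1 ht).2; omega))
  have hS : StronglyMeasurable[ℱ n] fun ω ↦ ∑ t ∈ Icc 1 n, X t ω :=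
    stronglyMeasurable_fun_sum _ fun t ht ↦
      (hX.stronglyAdapted t).mono (ℱ.mono (mem_Icc.1 ht).2)
  exact continuous_exp.comp_stronglyMeasurable ((hP.const_mul _).sub hS)

lemma ae_forall_mem_Icc_of_condExp (hX01 : ∀ t ω, X t ω = 0 ∨ X t ω = 1)
    (hcond : ∀ t, 1 ≤ t → μ[X t|ℱ (t - 1)] =ᵐ[μ] p t) :
    ∀ᵐ ω ∂μ, ∀ t, 1 ≤ t → p t ω ∈ Set.Icc 0 1 := by
  refine ae_all_iff.2 fun t ↦ ?_
  rcases Nat.eq_zero_or_pos t with rfl | ht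
  · exact Eventually.of_forall fun _ h ↦ absurd h (by omega)
  filter_upwards [ae_mem_Icc_of_condExp_ae_eq (fun ω ↦ mem_Icc_of_eq_zero_or_eq_one (hX01 t ω))
    (hcond t ht)] with ω hω using fun _ ↦ hω

variable [IsFiniteMeasure μ]

lemma integrable_of_eq_zero_or_eq_one (hX01 : ∀ t ω, X t ω = 0 ∨ X t ω = 1) (hX : Adapted ℱ X)
    (t : ℕ) : Integrable (X t) μ :=
  (integrable_const (1 : ℝ)).mono' ((hX t).mono (ℱ.le t) le_rfl).aestronglyMeasurable
    (Eventually.of_forall fun ω ↦ by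
      rw [Real.norm_of_nonneg (mem_Icc_of_eq_zero_or_eq_one (hX01 t ω)).1]
      exact (mem_Icc_of_eq_zero_or_eq_one (hX01 t ω)).2)

lemma integrable_lowerTailProcess (hX01 : ∀ t ω, X t ω = 0 ∨ X t ω = 1) (hX : Adapted ℱ X)
    (hp : ∀ t, 1 ≤ t → StronglyMeasurable[ℱ (t - 1)] (p t))
    (hcond : ∀ t, 1 ≤ t → μ[X t|ℱ (t - 1)] =ᵐ[μ] p t) (n : ℕ) :
    Integrable (lowerTailProcess X p n) μ := by
  refine (integrable_const (exp ((1 - exp (-1)) * n))).mono'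
    ((stronglyAdapted_lowerTailProcess hX hp n).mono (ℱ.le n)).aestronglyMeasurable ?_
  filter_upwards [ae_forall_mem_Icc_of_condExp hX01 hcond] with ω hω
  rw [Real.norm_of_nonneg (lowerTailProcess_pos n ω).le]
  exact lowerTailProcess_le_exp (fun t ↦ (mem_Icc_of_eq_zero_or_eq_one (hX01 t ω)).1)
    fun t ht ↦ (hω t (mem_Icc.1 ht).1).2

theorem supermartingale_lowerTailProcess (hX01 : ∀ t ω, X t ω = 0 ∨ X t ω = 1)
    (hX : Adapted ℱ X) (hp : ∀ t, 1 ≤ t → StronglyMeasurable[ℱ (t - 1)] (p t))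
    (hcond : ∀ t, 1 ≤ t → μ[X t|ℱ (t - 1)] =ᵐ[μ] p t) :
    Supermartingale (lowerTailProcess X p) ℱ μ := by
  have hM := stronglyAdapted_lowerTailProcess hX hp
  have hMint := integrable_lowerTailProcess hX01 hX hp hcond
  refine supermartingale_nat hM hMint fun n ↦ ?_
  have hpn : StronglyMeasurable[ℱ n] (p (n + 1)) := by simpa using hp (n + 1) n.succ_pos
  have hE : StronglyMeasurable[ℱ n] fun ω ↦ exp ((1 - exp (-1)) * p (n + 1) ω) :=
    continuous_exp.comp_stronglyMeasurable (hpn.const_mul _)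
  have hEbdd : ∀ᵐ ω ∂μ, ‖exp ((1 - exp (-1)) * p (n + 1) ω)‖ ≤ exp (1 - exp (-1)) := by
    filter_upwards [ae_forall_mem_Icc_of_condExp hX01 hcond] with ω hω
    rw [Real.norm_of_nonneg (exp_pos _).le, exp_le_exp]
    nlinarith [(hω (n + 1) n.succ_pos).2, exp_neg_one_lt_half]
  have hstep := condExp_mul_exp_neg_of_eq_zero_or_eq_one (ℱ.le n) ((hM n).mul hE)
    ((hMint n).mul_bdd (hE.mono (ℱ.le n)).aestronglyMeasurable hEbdd) (hX01 (n + 1))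
    (integrable_of_eq_zero_or_eq_one hX01 hX (n + 1)) (by simpa using hcond (n + 1) n.succ_pos)
  simp only [Pi.mul_apply] at hstep
  rw [show lowerTailProcess X p (n + 1) = _ from funext (lowerTailProcess_succ n)]
  filter_upwards [hstep] with ω hω
  rw [hω, mul_assoc]
  exact mul_le_of_le_one_right (lowerTailProcess_pos n ω).le (exp_mul_one_sub_le_one _)

end LowerTailProcess

/-- time-uniform lower-tail bound for adapted Bernoulli sums:
if `X_t ∈ {0,1}` with `E[X_t | F_{t−1}] = p_t` (`p_t` predictable), then
`P(∃ n, Σ_{t≤n} X_t < (Σ_{t≤n} p_t)/2 − log(1/δ)) ≤ δ`. -/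
theorem stmt10 {Ω : Type*} {m0 : MeasurableSpace Ω} (μ : Measure Ω)
    [IsProbabilityMeasure μ] (ℱ : Filtration ℕ m0)
    (X p : ℕ → Ω → ℝ)
    (hX01 : ∀ t ω, X t ω = 0 ∨ X t ω = 1)
    (hXadapted : Adapted ℱ X)
    (hppred : ∀ t, 1 ≤ t → StronglyMeasurable[ℱ (t - 1)] (p t))
    (hcond : ∀ t, 1 ≤ t → μ[X t|ℱ (t - 1)] =ᵐ[μ] p t)
    (δ : ℝ) (hδ : 0 < δ) :
    μ {ω | ∃ n : ℕ, ∑ t ∈ Finset.Icc 1 n, X t ω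
        < (∑ t ∈ Finset.Icc 1 n, p t ω) / 2 - Real.log (1 / δ)}
      ≤ ENNReal.ofReal δ := by
  have hville := (supermartingale_lowerTailProcess hX01 hXadapted hppred hcond).ville_ineq
    (fun n ω ↦ (lowerTailProcess_pos n ω).le) (1 / δ)
  simp only [lowerTailProcess_zero, Pi.one_apply, integral_const, probReal_univ, smul_eq_mul,
    mul_one, ENNReal.ofReal_one] at hville
  have hevent : {ω | ∃ n : ℕ, ∑ t ∈ Finset.Icc 1 n, X t ω
      < (∑ t ∈ Finset.Icc 1 n, p t ω) / 2 - Real.log (1 / δ)}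
      ≤ᵐ[μ] {ω | ∃ n, 1 / δ ≤ lowerTailProcess X p n ω} := by
    filter_upwards [ae_forall_mem_Icc_of_condExp hX01 hcond] with ω hp ⟨n, hn⟩
    exact ⟨n, inv_le_lowerTailProcess hδ
      (sum_nonneg fun t ht ↦ (hp t (mem_Icc.1 ht).1).1) hn⟩
  calc _ ≤ μ {ω | ∃ n, 1 / δ ≤ lowerTailProcess X p n ω} := measure_mono_ae hevent
    _ ≤ (ENNReal.ofReal (1 / δ))⁻¹ := ENNReal.le_inv_iff_mul_le.2 (by rwa [mul_comm])
    _ = ENNReal.ofReal δ := by rw [one_div, ENNReal.ofReal_inv_of_pos hδ, inv_inv]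
end

section
/- Let p be a categorical distribution on m outcomes and let P̂_n denote its empirical (frequency) estimate from n i.i.d. samples. Then P(∃ n ∈ ℕ, n·KL(P̂_n, p) > log(1/δ) + (m−1)·log(e(1 + n/(m−1)))) ≤ δ. -/
open MeasureTheory ProbabilityTheory

/-- Empirical frequency of outcome `j` among the first `n` i.i.d. samples `X_0, …, X_{n−1}`. -/
noncomputable def empFreq {Ω : Type*} {m : ℕ} (X : ℕ → Ω → Fin m) (n : ℕ) (ω : Ω)
    (j : Fin m) : ℝ :=
  (((Finset.range n).filter (fun i => X i ω = j)).card : ℝ) / n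

/-- KL divergence between probability vectors on `Fin m`. -/
noncomputable def KLvec {m : ℕ} (q p : Fin m → ℝ) : ℝ :=
  ∑ j, q j * Real.log (q j / p j)

/-!
Write `c` for the letter counts of a word `w` of length `n`, `p(w) = ∏ p_j ^ c_j` and `k = m - 1`.
Under the Laplace mixture (categorical laws with a uniformly distributed parameter) `w` has
probability `Q(w) = k! ∏ c_j! / (n + k)!`. Since `Q` is consistent under extension of words, the
words on which the threshold is first crossed form a prefix-free set of total `Q`-mass at most `1`
(a discrete Ville inequality). On a word of length `n`,
`n KL(c/n, p) = log (∏ (c_j/n) ^ c_j / p(w))`, and since one multinomial term is at most `n ^ n`,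
the maximum likelihood satisfies
`∏ (c_j/n) ^ c_j ≤ ∏ c_j! / n! = C(n+k, k) Q(w) ≤ (e(1 + n/k)) ^ k Q(w)`.
So crossing the threshold forces `p(w) ≤ δ Q(w)`, and summing over the prefix-free set gives `δ`.
-/

open Finset
open scoped Nat

theorem Nat.factorial_sum_mul_prod_pow_le {ι : Type*} [Fintype ι] [DecidableEq ι] (c : ι → ℕ) :
    (∑ i, c i)! * ∏ i, c i ^ c i ≤ (∑ i, c i) ^ (∑ i, c i) * ∏ i, (c i)! := by
  set N := ∑ i, c i
  have hterm : Nat.multinomial univ c * ∏ i, c i ^ c i ≤ N ^ N := by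
    rw [sum_pow_eq_sum_piAntidiag]
    exact single_le_sum (f := fun k => Nat.multinomial univ k * ∏ i, c i ^ k i)
      (fun _ _ => Nat.zero_le _) (by simp [N])
  calc N ! * ∏ i, c i ^ c i = (∏ i, (c i)!) * (Nat.multinomial univ c * ∏ i, c i ^ c i) := by
        rw [← Nat.multinomial_spec, mul_assoc]
    _ ≤ (∏ i, (c i)!) * N ^ N := Nat.mul_le_mul_left _ hterm
    _ = N ^ N * ∏ i, (c i)! := mul_comm _ _

theorem Nat.choose_add_le_exp_one_mul_pow (n k : ℕ) :
    ((n + k).choose k : ℝ) ≤ (Real.exp 1 * (1 + n / k)) ^ k := by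
  rcases Nat.eq_zero_or_pos k with rfl | hk
  · simp
  have hk' : (0 : ℝ) < k := by exact_mod_cast hk
  have hpow : (k : ℝ) ^ k ≤ Real.exp 1 ^ k * k ! := by
    rw [← Real.exp_nat_mul, mul_one, ← div_le_iff₀ (by positivity)]
    exact Real.pow_div_factorial_le_exp _ (by positivity) k
  calc ((n + k).choose k : ℝ) ≤ ((n + k : ℕ) : ℝ) ^ k / k ! := Nat.choose_le_pow_div k (n + k)
    _ ≤ ((n + k : ℕ) : ℝ) ^ k * Real.exp 1 ^ k / k ^ k := by
        rw [div_le_div_iff₀ (by positivity) (by positivity), mul_assoc]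
        gcongr
    _ = (Real.exp 1 * (1 + n / k)) ^ k := by
        rw [one_add_div hk'.ne', mul_div_assoc', div_pow, mul_pow]; push_cast; ring

/-- `∫ ∏ θ_i ^ c_i dθ` for `θ` uniform on the simplex (a Dirichlet integral). -/
noncomputable def laplaceMixture {ι : Type*} [Fintype ι] (c : ι → ℕ) : ℝ :=
  ((Fintype.card ι - 1)! * ∏ i, (c i)! : ℕ) / ((∑ i, c i) + (Fintype.card ι - 1))!

namespace laplaceMixture
variable {ι : Type*} [Fintype ι]

theorem pos (c : ι → ℕ) : 0 < laplaceMixture c := by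
  unfold laplaceMixture; positivity

@[simp] theorem zero : laplaceMixture (0 : ι → ℕ) = 1 := by
  simp [laplaceMixture, Nat.factorial_ne_zero]

theorem update_succ [DecidableEq ι] [Nonempty ι] (c : ι → ℕ) (a : ι) :
    laplaceMixture (Function.update c a (c a + 1))
      = (c a + 1) / ((∑ i, c i) + Fintype.card ι) * laplaceMixture c := by
  have hprod : ∏ i, (Function.update c a (c a + 1) i)! = (c a + 1) * ∏ i, (c i)! := by
    rw [← mul_prod_erase _ _ (mem_univ a), ← mul_prod_erase _ (fun i => (c i)!) (mem_univ a),
      Function.update_self, Nat.factorial_succ, mul_assoc]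
    congr 2
    exact prod_congr rfl fun i hi => by rw [Function.update_of_ne (ne_of_mem_erase hi)]
  have hsum : ∑ i, Function.update c a (c a + 1) i = (∑ i, c i) + 1 := by
    rw [sum_update_of_mem (mem_univ a), ← add_sum_erase _ _ (mem_univ a),
      sdiff_singleton_eq_erase]
    ring
  have hcard : (∑ i, c i) + 1 + (Fintype.card ι - 1) = (∑ i, c i) + (Fintype.card ι - 1) + 1 := by
    omega
  have hcard' : (((∑ i, c i) + (Fintype.card ι - 1) + 1 : ℕ) : ℝ)
      = (∑ i, c i : ℕ) + Fintype.card ι := by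
    push_cast [Nat.cast_sub Fintype.card_pos]
    ring
  unfold laplaceMixture
  rw [hprod, hsum, hcard, Nat.factorial_succ, Nat.cast_mul _ (_ !), hcard']
  push_cast
  field_simp

theorem sum_update_succ [DecidableEq ι] [Nonempty ι] (c : ι → ℕ) :
    ∑ a, laplaceMixture (Function.update c a (c a + 1)) = laplaceMixture c := by
  have hnum : ∑ a, ((c a : ℝ) + 1) = (∑ i, c i : ℕ) + Fintype.card ι := by
    push_cast [sum_add_distrib]; simp
  simp_rw [update_succ, ← sum_mul, ← sum_div, hnum]
  rw [div_self (by positivity), one_mul]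

theorem choose_mul_eq_prod_factorial_div (c : ι → ℕ) {n : ℕ} (hc : ∑ i, c i = n) :
    ((n + (Fintype.card ι - 1)).choose (Fintype.card ι - 1) : ℝ) * laplaceMixture c
      = (∏ i, (c i)! : ℕ) / (n ! : ℝ) := by
  have h := Nat.choose_mul_factorial_mul_factorial (Nat.le_add_left (Fintype.card ι - 1) n)
  have hchoose : ((n + (Fintype.card ι - 1)).choose (Fintype.card ι - 1) : ℝ) ≠ 0 := by
    exact_mod_cast (Nat.choose_pos (Nat.le_add_left _ n)).ne'
  rw [Nat.add_sub_cancel] at h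
  rw [laplaceMixture, hc, ← h]
  push_cast
  field_simp

theorem prod_div_pow_le (c : ι → ℕ) {n : ℕ} (hc : ∑ i, c i = n) :
    ∏ i, ((c i : ℝ) / n) ^ c i
      ≤ (Real.exp 1 * (1 + n / (Fintype.card ι - 1 : ℕ))) ^ (Fintype.card ι - 1)
          * laplaceMixture c := by
  classical
  have hfact := Nat.factorial_sum_mul_prod_pow_le c
  rw [hc] at hfact
  calc ∏ i, ((c i : ℝ) / n) ^ c i = (∏ i, c i ^ c i : ℕ) / ((n ^ n : ℕ) : ℝ) := by
        simp_rw [div_pow]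
        rw [prod_div_distrib, prod_pow_eq_pow_sum, hc]
        push_cast; rfl
    _ ≤ (∏ i, (c i)! : ℕ) / (n ! : ℝ) := by
        rw [div_le_div_iff₀ (by exact_mod_cast Nat.pow_self_pos) (by positivity)]
        exact_mod_cast (by linarith [hfact] : (∏ i, c i ^ c i) * n ! ≤ (∏ i, (c i)!) * n ^ n)
    _ = ((n + (Fintype.card ι - 1)).choose (Fintype.card ι - 1) : ℝ) * laplaceMixture c :=
        (choose_mul_eq_prod_factorial_div c hc).symm
    _ ≤ _ := by
        gcongr
        · exact (pos c).le
        · exact Nat.choose_add_le_exp_one_mul_pow _ _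

end laplaceMixture

section Words
variable {α : Type*} {n : ℕ}

def letterCount [DecidableEq α] (w : Fin n → α) (a : α) : ℕ := #{i | w i = a}

theorem sum_letterCount [Fintype α] [DecidableEq α] (w : Fin n → α) :
    ∑ a, letterCount w a = n := by
  simpa [letterCount] using (card_eq_sum_card_fiberwise (s := univ) (t := univ)
    (f := w) (fun i _ => mem_univ (w i))).symm

theorem letterCount_snoc [DecidableEq α] (w : Fin n → α) (a : α) :
    letterCount (Fin.snoc w a : Fin (n + 1) → α)
      = Function.update (letterCount w) a (letterCount w a + 1) := by
  funext b
  rcases eq_or_ne b a with rfl | hb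
  · simp only [letterCount, card_filter, Fin.sum_univ_castSucc, Fin.snoc_castSucc, Fin.snoc_last,
      Function.update_self, if_true]
  · simp only [letterCount, card_filter, Fin.sum_univ_castSucc, Fin.snoc_castSucc, Fin.snoc_last,
      Function.update_of_ne hb, if_neg (Ne.symm hb), add_zero]

theorem Fin.sum_fun_succ_eq_sum_snoc [Fintype α] {M : Type*} [AddCommMonoid M]
    (f : (Fin (n + 1) → α) → M) : ∑ v, f v = ∑ w : Fin n → α, ∑ a, f (Fin.snoc w a) := by
  rw [← Fintype.sum_prod_type_right',
    ← Fintype.sum_equiv (Fin.snocEquiv fun _ => α) _ _ (fun _ => rfl)]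
  rfl

theorem prod_pow_letterCount [Fintype α] [DecidableEq α] {M : Type*} [CommMonoid M]
    (p : α → M) (w : Fin n → α) : ∏ a, p a ^ letterCount w a = ∏ i, p (w i) := by
  simp_rw [letterCount, ← prod_const, prod_fiberwise']

end Words

theorem empFreq_eq_letterCount {Ω : Type*} {m : ℕ} (X : ℕ → Ω → Fin m) (n : ℕ) (ω : Ω) :
    empFreq X n ω = fun j => (letterCount (fun i : Fin n => X i ω) j : ℝ) / n := by
  funext j
  rw [empFreq, letterCount, card_filter, card_filter,
    ← Fin.sum_univ_eq_sum_range (fun i => if X i ω = j then 1 else 0)]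

section FirstHit
variable {α : Type*} (B : ∀ n, (Fin n → α) → Prop)

def AvoidsBefore (n : ℕ) (w : Fin n → α) : Prop :=
  ∀ k (hk : k < n), ¬ B k (Fin.take k hk.le w)

theorem avoidsBefore_snoc {n : ℕ} (w : Fin n → α) (a : α) :
    AvoidsBefore B (n + 1) (Fin.snoc w a : Fin (n + 1) → α) ↔ AvoidsBefore B n w ∧ ¬ B n w := by
  have htake : ∀ k (hk : k ≤ n), Fin.take k (hk.trans n.le_succ) (Fin.snoc w a : Fin (n + 1) → α)
      = Fin.take k hk w := fun k hk => by
    rw [← Fin.take_init, Fin.init_snoc]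
  refine ⟨fun h => ⟨fun k hk => ?_, ?_⟩, fun ⟨h, hn⟩ k hk => ?_⟩
  · rw [← htake]; exact h k (by omega)
  · simpa [htake] using h n n.lt_succ_self
  · rcases (Nat.lt_succ_iff.1 hk).lt_or_eq with hk | rfl
    · rw [htake k hk.le]; exact h k hk
    · simpa [htake] using hn

variable [Fintype α] {Q : ∀ n, (Fin n → α) → ℝ}

open Classical in
theorem sum_firstHit_add_sum_avoidsBefore_le (hQ : ∀ n w, 0 ≤ Q n w) (hQ0 : ∀ w, Q 0 w ≤ 1)
    (hQsucc : ∀ n w, ∑ a, Q (n + 1) (Fin.snoc w a) ≤ Q n w) (N : ℕ) :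
    ∑ n ∈ range N, ∑ w with AvoidsBefore B n w ∧ B n w, Q n w
      + ∑ w with AvoidsBefore B N w, Q N w ≤ 1 := by
  induction N with
  | zero =>
    simp only [range_zero, sum_empty, zero_add]
    exact (sum_le_sum_of_subset_of_nonneg (filter_subset _ _) fun w _ _ => hQ 0 w).trans
      (by simpa [Fintype.sum_unique] using hQ0 default)
  | succ N ih =>
    have hstep : ∑ w with AvoidsBefore B (N + 1) w, Q (N + 1) w
        ≤ ∑ w with AvoidsBefore B N w ∧ ¬ B N w, Q N w := by
      rw [sum_filter, sum_filter, Fin.sum_fun_succ_eq_sum_snoc]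
      refine sum_le_sum fun w _ => ?_
      simp_rw [avoidsBefore_snoc]
      split_ifs with h
      · exact hQsucc N w
      · simp
    have hsplit := sum_filter_add_sum_filter_not ({w | AvoidsBefore B N w} : Finset _) (B N) (Q N)
    rw [filter_filter, filter_filter] at hsplit
    rw [sum_range_succ]
    linarith

end FirstHit

section Cylinders
variable {Ω α : Type*} [MeasurableSpace Ω] {μ : Measure Ω} {X : ℕ → Ω → α}

theorem measure_cylinder_eq [MeasurableSpace α] [MeasurableSingletonClass α] [Fintype α]
    [DecidableEq α] (hX : iIndepFun X μ) {p : α → ℝ} (hp : ∀ a, 0 ≤ p a)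
    (hid : ∀ i a, μ {ω | X i ω = a} = ENNReal.ofReal (p a)) {n : ℕ} (w : Fin n → α) :
    μ {ω | ∀ i : Fin n, X i ω = w i} = ENNReal.ofReal (∏ a, p a ^ letterCount w a) := by
  have hXn : iIndepFun (fun i : Fin n => X i) μ := hX.precomp Fin.val_injective
  have hcyl : {ω | ∀ i : Fin n, X i ω = w i} = ⋂ i : Fin n, X i ⁻¹' {w i} := by ext; simp
  rw [hcyl, hXn.meas_iInter fun i => ⟨{w i}, measurableSet_singleton _, rfl⟩,
    prod_pow_letterCount, ENNReal.ofReal_prod_of_nonneg fun i _ => hp (w i)]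
  exact prod_congr rfl fun i _ => hid i (w i)

open Classical in
theorem measure_exists_le_of_cylinder_le [Fintype α] {Q : ∀ n, (Fin n → α) → ℝ}
    (hQ : ∀ n w, 0 ≤ Q n w) (hQ0 : ∀ w, Q 0 w ≤ 1)
    (hQsucc : ∀ n w, ∑ a, Q (n + 1) (Fin.snoc w a) ≤ Q n w)
    (B : ∀ n, (Fin n → α) → Prop) {δ : ℝ} (hδ : 0 ≤ δ)
    (hB : ∀ n w, B n w → μ {ω | ∀ i : Fin n, X i ω = w i} ≤ ENNReal.ofReal (δ * Q n w)) :
    μ {ω | ∃ n, B n fun i : Fin n => X i ω} ≤ ENNReal.ofReal δ := by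
  set cyl : ∀ n, (Fin n → α) → Set Ω := fun n w => {ω | ∀ i : Fin n, X i ω = w i}
  have hfirst : {ω | ∃ n, B n fun i : Fin n => X i ω}
      ⊆ ⋃ n, ⋃ w ∈ ({w | AvoidsBefore B n w ∧ B n w} : Finset _), cyl n w := by
    rintro ω ⟨n, hn⟩
    have hex : ∃ n, B n fun i : Fin n => X i ω := ⟨n, hn⟩
    refine Set.mem_iUnion.2 ⟨Nat.find hex, Set.mem_iUnion₂.2 ⟨fun i => X i ω, ?_, fun i => rfl⟩⟩
    exact mem_filter.2 ⟨mem_univ _, fun k hk => Nat.find_min hex hk, Nat.find_spec hex⟩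
  refine (measure_mono hfirst).trans <| (measure_iUnion_le _).trans <|
    ENNReal.tsum_le_of_sum_range_le fun N => ?_
  calc ∑ n ∈ range N, μ (⋃ w ∈ ({w | AvoidsBefore B n w ∧ B n w} : Finset _), cyl n w)
      ≤ ∑ n ∈ range N, ∑ w with AvoidsBefore B n w ∧ B n w, ENNReal.ofReal (δ * Q n w) :=
        sum_le_sum fun n _ => (measure_biUnion_finset_le _ _).trans <|
          sum_le_sum fun w hw => hB n w (mem_filter.1 hw).2.2
    _ = ENNReal.ofReal (δ * ∑ n ∈ range N, ∑ w with AvoidsBefore B n w ∧ B n w, Q n w) := by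
        simp_rw [mul_sum]
        rw [ENNReal.ofReal_sum_of_nonneg fun n _ => sum_nonneg fun w _ => mul_nonneg hδ (hQ n w)]
        exact sum_congr rfl fun n _ =>
          (ENNReal.ofReal_sum_of_nonneg fun w _ => mul_nonneg hδ (hQ n w)).symm
    _ ≤ ENNReal.ofReal δ := by
        refine ENNReal.ofReal_le_ofReal (mul_le_of_le_one_right hδ ?_)
        have := sum_firstHit_add_sum_avoidsBefore_le B hQ hQ0 hQsucc N
        linarith [sum_nonneg fun w (_ : w ∈ ({w | AvoidsBefore B N w} : Finset _)) => hQ N w]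

end Cylinders

theorem mul_KLvec_eq_log_div {m n : ℕ} (hn : n ≠ 0) (c : Fin m → ℕ) {p : Fin m → ℝ}
    (hp : ∀ j, c j ≠ 0 → 0 < p j) :
    n * KLvec (fun j => (c j : ℝ) / n) p
      = Real.log ((∏ j, ((c j : ℝ) / n) ^ c j) / ∏ j, p j ^ c j) := by
  have hn' : (n : ℝ) ≠ 0 := Nat.cast_ne_zero.2 hn
  rw [← prod_div_distrib, Real.log_prod, KLvec, mul_sum]
  · refine sum_congr rfl fun j _ => ?_
    rw [← div_pow, Real.log_pow, ← mul_assoc, mul_div_cancel₀ _ hn']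
  · intro j _
    rcases eq_or_ne (c j) 0 with hc | hc
    · simp [hc]
    · have := hp j hc
      have : (0 : ℝ) < c j := by exact_mod_cast Nat.pos_of_ne_zero hc
      positivity

theorem prod_pow_le_mul_laplaceMixture {m n : ℕ} (hn : n ≠ 0) {p : Fin m → ℝ}
    (hp : ∀ j, 0 ≤ p j) {δ : ℝ} (hδ : 0 < δ) {c : Fin m → ℕ} (hc : ∑ j, c j = n)
    (hKL : Real.log (1 / δ)
        + ((m : ℝ) - 1) * Real.log (Real.exp 1 * (1 + (n : ℝ) / ((m : ℝ) - 1)))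
      < n * KLvec (fun j => (c j : ℝ) / n) p) :
    ∏ j, p j ^ c j ≤ δ * laplaceMixture c := by
  -- An observed letter of probability `0` makes the KL divergence junk (`log (q / 0) = 0`),
  -- but then the word itself has probability `0`.
  by_cases hzero : ∃ j, p j = 0 ∧ c j ≠ 0
  · obtain ⟨j, hpj, hcj⟩ := hzero
    rw [prod_eq_zero (mem_univ j) (by rw [hpj, zero_pow hcj])]
    exact mul_nonneg hδ.le (laplaceMixture.pos c).le
  push Not at hzero
  have hpos : ∀ j, c j ≠ 0 → 0 < p j :=
    fun j hcj => (hp j).lt_of_ne fun h => hcj (hzero j h.symm)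
  have hm : m ≠ 0 := by rintro rfl; simp at hc; omega
  have hm' : (m : ℝ) - 1 = (m - 1 : ℕ) := by rw [Nat.cast_pred (Nat.pos_of_ne_zero hm)]
  set L := ∏ j, ((c j : ℝ) / n) ^ c j
  set P := ∏ j, p j ^ c j
  set x := Real.exp 1 * (1 + (n : ℝ) / (m - 1 : ℕ))
  have hL : 0 < L := prod_pos fun j _ => by
    rcases eq_or_ne (c j) 0 with hcj | hcj
    · simp [hcj]
    · have : (0 : ℝ) < c j := by exact_mod_cast Nat.pos_of_ne_zero hcj
      positivity
  have hP : 0 < P := prod_pos fun j _ => by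
    rcases eq_or_ne (c j) 0 with hcj | hcj
    · simp [hcj]
    · exact pow_pos (hpos j hcj) _
  have hx : 0 < x := by positivity
  have hregret : L ≤ x ^ (m - 1) * laplaceMixture c := by
    simpa only [Fintype.card_fin] using laplaceMixture.prod_div_pow_le c hc
  have hratio : 1 / δ * x ^ (m - 1) < L / P := by
    rw [← Real.log_lt_log_iff (by positivity) (by positivity), Real.log_mul (by positivity)
      (by positivity), Real.log_pow, ← mul_KLvec_eq_log_div hn c hpos]
    rwa [hm'] at hKL
  calc P = δ * (1 / δ * x ^ (m - 1)) * P / x ^ (m - 1) := by field_simp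
    _ ≤ δ * (L / P) * P / x ^ (m - 1) := by gcongr
    _ = δ * L / x ^ (m - 1) := by field_simp
    _ ≤ δ * laplaceMixture c := by
        rw [div_le_iff₀ (by positivity), mul_assoc]
        gcongr
        linarith

theorem stmt11_general {Ω : Type*} [MeasurableSpace Ω] (μ : Measure Ω)
    (m : ℕ) (p : Fin m → ℝ)
    (hp : (∀ j, 0 ≤ p j) ∧ ∑ j, p j = 1)
    (X : ℕ → Ω → Fin m)
    (hindep : iIndepFun X μ)
    (hid : ∀ i j, μ {ω | X i ω = j} = ENNReal.ofReal (p j))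
    (δ : ℝ) (hδ : 0 < δ) :
    μ {ω | ∃ n : ℕ, 0 < n ∧
        (n : ℝ) * KLvec (empFreq X n ω) p
          > Real.log (1 / δ)
            + ((m : ℝ) - 1) * Real.log (Real.exp 1 * (1 + (n : ℝ) / ((m : ℝ) - 1)))}
      ≤ ENNReal.ofReal δ := by
  obtain ⟨hp0, hp1⟩ := hp
  have : NeZero m := ⟨by rintro rfl; simp at hp1⟩
  simp_rw [empFreq_eq_letterCount]
  refine measure_exists_le_of_cylinder_le (μ := μ) (X := X)
    (Q := fun n (w : Fin n → Fin m) => laplaceMixture (letterCount w))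
    (fun _ _ => (laplaceMixture.pos _).le) (fun w => ?_) (fun n w => ?_)
    (fun n w => 0 < n ∧ (n : ℝ) * KLvec (fun j => (letterCount w j : ℝ) / n) p > Real.log (1 / δ)
      + ((m : ℝ) - 1) * Real.log (Real.exp 1 * (1 + (n : ℝ) / ((m : ℝ) - 1)))) hδ.le ?_
  · have hw : letterCount w = 0 := funext fun a => by simp [letterCount]
    simp [hw]
  · simp_rw [letterCount_snoc]
    exact (laplaceMixture.sum_update_succ _).le
  · rintro n w ⟨hn, hKL⟩
    rw [measure_cylinder_eq hindep hp0 hid]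
    exact ENNReal.ofReal_le_ofReal <|
      prod_pow_le_mul_laplaceMixture hn.ne' hp0 hδ (sum_letterCount w) hKL

/-- time-uniform KL concentration of the empirical distribution of a
categorical distribution `p` on `m` outcomes:
`P(∃ n ≥ 1, n·KL(P̂_n, p) > log(1/δ) + (m−1) log(e(1 + n/(m−1)))) ≤ δ`. -/
theorem stmt11 {Ω : Type*} [MeasurableSpace Ω] (μ : Measure Ω) [IsProbabilityMeasure μ]
    (m : ℕ) (p : Fin m → ℝ)
    (hp : (∀ j, 0 ≤ p j) ∧ ∑ j, p j = 1)
    (X : ℕ → Ω → Fin m) (hmeas : ∀ i, Measurable (X i))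
    (hindep : iIndepFun X μ)
    (hid : ∀ i j, μ {ω | X i ω = j} = ENNReal.ofReal (p j))
    (δ : ℝ) (hδ : 0 < δ) :
    μ {ω | ∃ n : ℕ, 0 < n ∧
        (n : ℝ) * KLvec (empFreq X n ω) p
          > Real.log (1 / δ)
            + ((m : ℝ) - 1) * Real.log (Real.exp 1 * (1 + (n : ℝ) / ((m : ℝ) - 1)))}
      ≤ ENNReal.ofReal δ :=
  stmt11_general μ m p hp X hindep hid δ hδ
end

section
/- In the offline VI-LCB setting: suppose the pessimistic value iteration produces Q̂_h(s,a) = max(0, r_h(s,a) + P̂_h V̂_{h+1}(s,a) − b_h(s,a)) with greedy policy π̂ and value V̂_h, where on a good event |（P_h − P̂_h)V̂_{h+1}(s,a)| ≤ b_h(s,a) for all h,s,a and Q̂_h(s,a) ≤ Q_h^{π̂}(s,a). Then the suboptimality with respect to the behavior policy μ satisfies V_1^μ − V_1^{π̂} ≤ 2·Σ_{h=1}^H Σ_{(s,a)} d_h^μ(s,a)·b_h(s,a). -/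
open Finset

/-- `P` is a transition kernel: nonnegative and sums to one over next states. -/
def IsKernel {S A : Type*} [Fintype S] (P : ℕ → S → A → S → ℝ) : Prop :=
  ∀ h s a, (∀ s', 0 ≤ P h s a s') ∧ ∑ s', P h s a s' = 1

/-- `π` is a (Markov) policy: for each step and state, a probability distribution on actions. -/
def IsPolicy {S A : Type*} [Fintype A] (π : ℕ → S → A → ℝ) : Prop :=
  ∀ h s, (∀ a, 0 ≤ π h s a) ∧ ∑ a, π h s a = 1

/-- Value function `V_h^π(s)` by backward recursion, with `V_{H+1} ≡ 0`. -/
noncomputable def Vval {S A : Type*} [Fintype S] [Fintype A] (H : ℕ)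
    (P : ℕ → S → A → S → ℝ) (r : ℕ → S → A → ℝ) (π : ℕ → S → A → ℝ)
    (h : ℕ) (s : S) : ℝ :=
  if hh : h ≤ H then
    ∑ a, π h s a * (r h s a + ∑ s', P h s a s' * Vval H P r π (h + 1) s')
  else 0
termination_by H + 1 - h
decreasing_by omega

/-- Action-value function `Q_h^π(s,a)`. -/
noncomputable def Qval {S A : Type*} [Fintype S] [Fintype A] (H : ℕ)
    (P : ℕ → S → A → S → ℝ) (r : ℕ → S → A → ℝ) (π : ℕ → S → A → ℝ)
    (h : ℕ) (s : S) (a : A) : ℝ :=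
  r h s a + ∑ s', P h s a s' * Vval H P r π (h + 1) s'

/-- The (deterministic) policy `π̂` viewed as a distributional policy. -/
def detPolicy {S A : Type*} [DecidableEq A] (πhat : ℕ → S → A) : ℕ → S → A → ℝ :=
  fun h s a => if a = πhat h s then 1 else 0


section Aux

variable {S A : Type*} [Fintype S] [Fintype A] [DecidableEq S] [DecidableEq A]

lemma vval_top (H : ℕ) (P : ℕ → S → A → S → ℝ) (r : ℕ → S → A → ℝ)
    (π : ℕ → S → A → ℝ) (h : ℕ) (hh : H < h) (s : S) : Vval H P r π h s = 0 := by
  rw [Vval, dif_neg (by omega)]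

lemma vval_eq (H : ℕ) (P : ℕ → S → A → S → ℝ) (r : ℕ → S → A → ℝ)
    (π : ℕ → S → A → ℝ) (h : ℕ) (hh : h ≤ H) (s : S) :
    Vval H P r π h s
      = ∑ a, π h s a * (r h s a + ∑ s', P h s a s' * Vval H P r π (h + 1) s') := by
  rw [Vval, dif_pos hh]

lemma occ_nonneg (s₁ : S) (P : ℕ → S → A → S → ℝ) (μ : ℕ → S → A → ℝ)
    (hP : IsKernel P) (hμ : IsPolicy μ) : ∀ h s a, 0 ≤ occ s₁ P μ h s a := by
  intro h
  induction h using Nat.strong_induction_on with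
  | _ h ih =>
    match h with
    | 0 => intro s a; simp [occ]
    | 1 =>
      intro s a
      unfold occ
      apply mul_nonneg
      · split_ifs <;> norm_num
      · exact (hμ 1 s).1 a
    | (m + 2) =>
      intro s a
      unfold occ
      apply mul_nonneg ((hμ (m + 2) s).1 a)
      apply Finset.sum_nonneg; intro s' _
      apply Finset.sum_nonneg; intro a' _
      exact mul_nonneg (ih (m + 1) (by omega) s' a') ((hP (m + 1) s' a').1 s)

lemma occ_fac (s₁ : S) (P : ℕ → S → A → S → ℝ) (μ : ℕ → S → A → ℝ)
    (hμ : IsPolicy μ) (h : ℕ) (hh : 1 ≤ h) (s : S) (a : A) :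
    occ s₁ P μ h s a = (∑ a', occ s₁ P μ h s a') * μ h s a := by
  match h with
  | 1 =>
    unfold occ
    rw [← Finset.mul_sum, (hμ 1 s).2, mul_one]
  | (m + 2) =>
    unfold occ
    rw [← Finset.sum_mul, (hμ (m + 2) s).2, one_mul]
    exact mul_comm _ _

lemma occ_flow (s₁ : S) (P : ℕ → S → A → S → ℝ) (μ : ℕ → S → A → ℝ)
    (hμ : IsPolicy μ) (h : ℕ) (hh : 1 ≤ h) (s' : S) :
    ∑ a, occ s₁ P μ (h + 1) s' a = ∑ s, ∑ a, occ s₁ P μ h s a * P h s a s' := by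
  obtain ⟨m, rfl⟩ : ∃ m, h = m + 1 := ⟨h - 1, by omega⟩
  have hocc2 : ∀ a, occ s₁ P μ (m + 2) s' a
      = μ (m + 2) s' a * ∑ s'', ∑ a', occ s₁ P μ (m + 1) s'' a' * P (m + 1) s'' a' s' :=
    fun a => rfl
  simp_rw [hocc2]
  rw [← Finset.sum_mul, (hμ (m + 2) s').2, one_mul]

end Aux

/-- offline VI-LCB suboptimality with respect to the behavior policy `μ`:
under the good event (`|(P_h − P̂_h)V̂_{h+1}(s,a)| ≤ b_h(s,a)` and `Q̂_h ≤ Q_h^{π̂}`),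
with `Q̂_h(s,a) = max(0, r_h + P̂_h V̂_{h+1} − b_h)`, `π̂` greedy, `V̂_h(s) = Q̂_h(s, π̂_h(s))`,
we have `V_1^μ − V_1^{π̂} ≤ 2 Σ_h Σ_{s,a} d_h^μ(s,a) b_h(s,a)`. -/
theorem stmt12 {S A : Type*} [Fintype S] [Fintype A] [DecidableEq S] [DecidableEq A]
    (H : ℕ) (s₁ : S) (P Phat : ℕ → S → A → S → ℝ) (r b : ℕ → S → A → ℝ)
    (hP : IsKernel P) (hr : ∀ h s a, 0 ≤ r h s a ∧ r h s a ≤ 1)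
    (hb : ∀ h s a, 0 ≤ b h s a)
    (μpol : ℕ → S → A → ℝ) (hμ : IsPolicy μpol)
    (Qhat : ℕ → S → A → ℝ) (Vhat : ℕ → S → ℝ) (πhat : ℕ → S → A)
    (hVhatTop : ∀ s, Vhat (H + 1) s = 0)
    (hQhat : ∀ h, 1 ≤ h → h ≤ H → ∀ s a,
      Qhat h s a = max 0 (r h s a + (∑ s', Phat h s a s' * Vhat (h + 1) s') - b h s a))
    (hgreedy : ∀ h s a, Qhat h s a ≤ Qhat h s (πhat h s))
    (hVhat : ∀ h, 1 ≤ h → h ≤ H → ∀ s, Vhat h s = Qhat h s (πhat h s))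
    (hgood : ∀ h, 1 ≤ h → h ≤ H → ∀ s a,
      |(∑ s', P h s a s' * Vhat (h + 1) s') - (∑ s', Phat h s a s' * Vhat (h + 1) s')|
        ≤ b h s a)
    (hpess : ∀ h, 1 ≤ h → h ≤ H → ∀ s a,
      Qhat h s a ≤ Qval H P r (detPolicy πhat) h s a) :
    Vval H P r μpol 1 s₁ - Vval H P r (detPolicy πhat) 1 s₁
      ≤ 2 * ∑ h ∈ Finset.Icc 1 H, ∑ s, ∑ a, occ s₁ P μpol h s a * b h s a :=  by
  have hocc0 : ∀ h s a, 0 ≤ occ s₁ P μpol h s a := occ_nonneg s₁ P μpol hP hμ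
  have hRHSnn : ∀ h', (0:ℝ) ≤ ∑ s, ∑ a, occ s₁ P μpol h' s a * b h' s a := by
    intro h'
    apply Finset.sum_nonneg; intro s _
    apply Finset.sum_nonneg; intro a _
    exact mul_nonneg (hocc0 h' s a) (hb h' s a)
  by_cases hH0 : H = 0
  · subst hH0
    rw [vval_top 0 P r μpol 1 (by omega), vval_top 0 P r (detPolicy πhat) 1 (by omega)]
    have : (0:ℝ) ≤ ∑ h ∈ Finset.Icc 1 0, ∑ s, ∑ a, occ s₁ P μpol h s a * b h s a :=
      Finset.sum_nonneg (fun h _ => hRHSnn h)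
    linarith
  have h1H : 1 ≤ H := by omega
  -- key induction
  have key : ∀ k h, h + k = H + 1 → 1 ≤ h →
      ∑ s, (∑ a, occ s₁ P μpol h s a) * (Vval H P r μpol h s - Vhat h s)
        ≤ 2 * ∑ h' ∈ Finset.Icc h H, ∑ s, ∑ a, occ s₁ P μpol h' s a * b h' s a := by
    intro k
    induction k with
    | zero =>
      intro h hk _
      have hh : h = H + 1 := by omega
      subst hh
      rw [Finset.Icc_eq_empty (by omega)]
      simp [vval_top H P r μpol (H + 1) (by omega), hVhatTop]
    | succ k ih =>
      intro h hk h1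
      have hhH : h ≤ H := by omega
      -- pointwise inequality
      have hpoint : ∀ s, Vval H P r μpol h s - Vhat h s
          ≤ ∑ a, μpol h s a *
              ((∑ s', P h s a s' * (Vval H P r μpol (h + 1) s' - Vhat (h + 1) s'))
                + 2 * b h s a) := by
        intro s
        have hV := vval_eq H P r μpol h hhH s
        have hVh : ∑ a, μpol h s a *
            (r h s a + (∑ s', P h s a s' * Vhat (h + 1) s') - 2 * b h s a)
            ≤ Vhat h s := by
          have hQa : ∀ a, r h s a + (∑ s', P h s a s' * Vhat (h + 1) s') - 2 * b h s a
              ≤ Qhat h s a := by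
            intro a
            rw [hQhat h h1 hhH]
            have hg := abs_le.mp (hgood h h1 hhH s a)
            have : r h s a + (∑ s', P h s a s' * Vhat (h + 1) s') - 2 * b h s a
                ≤ r h s a + (∑ s', Phat h s a s' * Vhat (h + 1) s') - b h s a := by
              linarith [hg.1]
            exact this.trans (le_max_right _ _)
          calc ∑ a, μpol h s a *
                (r h s a + (∑ s', P h s a s' * Vhat (h + 1) s') - 2 * b h s a)
              ≤ ∑ a, μpol h s a * Qhat h s a := by
                apply Finset.sum_le_sum; intro a _
                exact mul_le_mul_of_nonneg_left (hQa a) ((hμ h s).1 a)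
            _ ≤ ∑ a, μpol h s a * Qhat h s (πhat h s) := by
                apply Finset.sum_le_sum; intro a _
                exact mul_le_mul_of_nonneg_left (hgreedy h s a) ((hμ h s).1 a)
            _ = Qhat h s (πhat h s) := by rw [← Finset.sum_mul, (hμ h s).2, one_mul]
            _ = Vhat h s := (hVhat h h1 hhH s).symm
        have hsplit : (∑ a, μpol h s a *
              (r h s a + ∑ s', P h s a s' * Vval H P r μpol (h + 1) s'))
            - (∑ a, μpol h s a *
              (r h s a + (∑ s', P h s a s' * Vhat (h + 1) s') - 2 * b h s a))
            = ∑ a, μpol h s a *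
              ((∑ s', P h s a s' * (Vval H P r μpol (h + 1) s' - Vhat (h + 1) s'))
                + 2 * b h s a) := by
          rw [← Finset.sum_sub_distrib]
          apply Finset.sum_congr rfl; intro a _
          have : ∑ s', P h s a s' * (Vval H P r μpol (h + 1) s' - Vhat (h + 1) s')
              = (∑ s', P h s a s' * Vval H P r μpol (h + 1) s')
                - (∑ s', P h s a s' * Vhat (h + 1) s') := by
            rw [← Finset.sum_sub_distrib]
            exact Finset.sum_congr rfl (fun s' _ => by ring)
          rw [this]; ring
        rw [hV]
        linarith [hsplit, hVh]
      -- weighted sum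
      have hρ0 : ∀ s, (0:ℝ) ≤ ∑ a, occ s₁ P μpol h s a :=
        fun s => Finset.sum_nonneg (fun a _ => hocc0 h s a)
      have step1 : ∑ s, (∑ a, occ s₁ P μpol h s a) * (Vval H P r μpol h s - Vhat h s)
          ≤ ∑ s, ∑ a, occ s₁ P μpol h s a *
              ((∑ s', P h s a s' * (Vval H P r μpol (h + 1) s' - Vhat (h + 1) s'))
                + 2 * b h s a) := by
        apply Finset.sum_le_sum; intro s _
        calc (∑ a, occ s₁ P μpol h s a) * (Vval H P r μpol h s - Vhat h s)
            ≤ (∑ a, occ s₁ P μpol h s a) * (∑ a, μpol h s a *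
              ((∑ s', P h s a s' * (Vval H P r μpol (h + 1) s' - Vhat (h + 1) s'))
                + 2 * b h s a)) := mul_le_mul_of_nonneg_left (hpoint s) (hρ0 s)
          _ = ∑ a, occ s₁ P μpol h s a *
              ((∑ s', P h s a s' * (Vval H P r μpol (h + 1) s' - Vhat (h + 1) s'))
                + 2 * b h s a) := by
              rw [Finset.mul_sum]
              apply Finset.sum_congr rfl; intro a _
              rw [occ_fac s₁ P μpol hμ h h1 s a]; ring
      have step2 : ∑ s, ∑ a, occ s₁ P μpol h s a *
              ((∑ s', P h s a s' * (Vval H P r μpol (h + 1) s' - Vhat (h + 1) s'))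
                + 2 * b h s a)
          = (∑ s', (∑ a, occ s₁ P μpol (h + 1) s' a) *
              (Vval H P r μpol (h + 1) s' - Vhat (h + 1) s'))
            + 2 * ∑ s, ∑ a, occ s₁ P μpol h s a * b h s a := by
        have e1 : ∀ s a, occ s₁ P μpol h s a *
              ((∑ s', P h s a s' * (Vval H P r μpol (h + 1) s' - Vhat (h + 1) s'))
                + 2 * b h s a)
            = (∑ s', occ s₁ P μpol h s a * P h s a s' *
                (Vval H P r μpol (h + 1) s' - Vhat (h + 1) s'))
              + 2 * (occ s₁ P μpol h s a * b h s a) := by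
          intro s a
          rw [mul_add, Finset.mul_sum]
          congr 1
          · exact Finset.sum_congr rfl (fun s' _ => by ring)
          · ring
        simp_rw [e1, Finset.sum_add_distrib, ← Finset.mul_sum]
        congr 1
        calc ∑ s, ∑ a, ∑ s', occ s₁ P μpol h s a * P h s a s' *
                (Vval H P r μpol (h + 1) s' - Vhat (h + 1) s')
            = ∑ s, ∑ s', ∑ a, occ s₁ P μpol h s a * P h s a s' *
                (Vval H P r μpol (h + 1) s' - Vhat (h + 1) s') :=
              Finset.sum_congr rfl (fun s _ => Finset.sum_comm)
          _ = ∑ s', ∑ s, ∑ a, occ s₁ P μpol h s a * P h s a s' *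
                (Vval H P r μpol (h + 1) s' - Vhat (h + 1) s') :=
              Finset.sum_comm
          _ = ∑ s', (∑ a, occ s₁ P μpol (h + 1) s' a) *
                (Vval H P r μpol (h + 1) s' - Vhat (h + 1) s') := by
              apply Finset.sum_congr rfl; intro s' _
              rw [occ_flow s₁ P μpol hμ h h1 s', Finset.sum_mul]
              apply Finset.sum_congr rfl; intro s _
              rw [Finset.sum_mul]
      have hIcc : Finset.Icc h H = insert h (Finset.Icc (h + 1) H) := by
        ext x; simp only [Finset.mem_Icc, Finset.mem_insert]; omega
      have hnot : h ∉ Finset.Icc (h + 1) H := by simp [Finset.mem_Icc]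
      have ihh := ih (h + 1) (by omega) (by omega)
      rw [hIcc, Finset.sum_insert hnot]
      calc ∑ s, (∑ a, occ s₁ P μpol h s a) * (Vval H P r μpol h s - Vhat h s)
          ≤ (∑ s', (∑ a, occ s₁ P μpol (h + 1) s' a) *
              (Vval H P r μpol (h + 1) s' - Vhat (h + 1) s'))
            + 2 * ∑ s, ∑ a, occ s₁ P μpol h s a * b h s a := by
            rw [← step2]; exact step1
        _ ≤ 2 * (∑ h' ∈ Finset.Icc (h + 1) H, ∑ s, ∑ a, occ s₁ P μpol h' s a * b h' s a)
            + 2 * ∑ s, ∑ a, occ s₁ P μpol h s a * b h s a := by linarith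
        _ = 2 * ((∑ s, ∑ a, occ s₁ P μpol h s a * b h s a)
            + ∑ h' ∈ Finset.Icc (h + 1) H, ∑ s, ∑ a, occ s₁ P μpol h' s a * b h' s a) := by
            ring
  -- V̂₁ ≤ V₁^{π̂}
  have hdet : ∀ h s, h ≤ H → Vval H P r (detPolicy πhat) h s
      = Qval H P r (detPolicy πhat) h s (πhat h s) := by
    intro h s hh
    rw [vval_eq H P r (detPolicy πhat) h hh s]
    simp only [detPolicy, ite_mul, one_mul, zero_mul]
    rw [Finset.sum_ite_eq' Finset.univ (πhat h s)]
    simp [Qval]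
  have hVhatle : Vhat 1 s₁ ≤ Vval H P r (detPolicy πhat) 1 s₁ := by
    rw [hVhat 1 le_rfl h1H s₁, hdet 1 s₁ h1H]
    exact hpess 1 le_rfl h1H s₁ (πhat 1 s₁)
  have hρ1 : ∀ s, ∑ a, occ s₁ P μpol 1 s a = if s = s₁ then (1:ℝ) else 0 := by
    intro s
    show ∑ a, (if s = s₁ then (1:ℝ) else 0) * μpol 1 s a = _
    rw [← Finset.mul_sum, (hμ 1 s).2, mul_one]
  have hkey := key H 1 (by omega) le_rfl
  have hsum1 : ∑ s, (∑ a, occ s₁ P μpol 1 s a) * (Vval H P r μpol 1 s - Vhat 1 s)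
      = Vval H P r μpol 1 s₁ - Vhat 1 s₁ := by
    simp_rw [hρ1]
    rw [Finset.sum_eq_single s₁]
    · simp
    · intro s _ hs; simp [hs]
    · intro hs; exact absurd (Finset.mem_univ s₁) hs
  rw [hsum1] at hkey
  linarith
end

section
/- Under the good events and with LCBs Q̲_h^{k,h0} ≤ Q_h^{k,h0} ≤ Q_h^{*,h0} ≤ Q̃_h^{k,h0} (valid confidence bounds for candidate policies), any executed policy π^k of StepMix—whether the baseline π^b, the optimistic policy, or a one-step mixture π^k = (1−ρ)π^{k,h^k} + ρπ^{k,h^k−1} with ρ = (V̲_1^{k,h^k} − γ)/(V̲_1^{k,h^k} − V̲_1^{k,h^k−1})—satisfies V_1^{π^k} ≥ γ, provided the baseline satisfies V_1^{π^b} ≥ γ. -/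
/-! Let `h^k` be the first candidate whose LCB clears `γ`; if there is none, the baseline runs
and is safe by assumption, and if `h^k = 0` the candidate's value dominates its LCB `≥ γ`.
Otherwise `L (h^k - 1) < γ ≤ L h^k`, so `ρ ∈ [0, 1]` and the `ρ`-mixture of the two LCBs is
exactly `γ`; since each LCB is below the corresponding true value, the same mixture of true
values, which is the value of the executed policy, is at least `γ`. -/

section MixingWeight

variable {𝕜 : Type*} [Field 𝕜] {a b γ : 𝕜}

def mixingWeight (a b γ : 𝕜) : 𝕜 := (b - γ) / (b - a)

lemma mixingWeight_mul_add (hab : a ≠ b) :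
    mixingWeight a b γ * a + (1 - mixingWeight a b γ) * b = γ := by
  have hden : b - a ≠ 0 := sub_ne_zero.mpr hab.symm
  unfold mixingWeight
  field_simp
  ring

variable [LinearOrder 𝕜] [IsStrictOrderedRing 𝕜]

lemma mixingWeight_nonneg (hγb : γ ≤ b) (hab : a < b) : 0 ≤ mixingWeight a b γ :=
  div_nonneg (sub_nonneg.mpr hγb) (sub_pos.mpr hab).le

lemma mixingWeight_le_one (haγ : a < γ) (hγb : γ ≤ b) : mixingWeight a b γ ≤ 1 :=
  div_le_one_of_le₀ (by linarith) (by linarith)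

lemma convex_combo_le_convex_combo {ρ a b x y : 𝕜} (hρ0 : 0 ≤ ρ) (hρ1 : ρ ≤ 1)
    (hax : a ≤ x) (hby : b ≤ y) : ρ * a + (1 - ρ) * b ≤ ρ * x + (1 - ρ) * y := by
  have : 0 ≤ 1 - ρ := sub_nonneg.mpr hρ1
  gcongr

lemma le_mixingWeight_mul_add {x y : 𝕜} (haγ : a < γ) (hγb : γ ≤ b)
    (hax : a ≤ x) (hby : b ≤ y) :
    γ ≤ mixingWeight a b γ * x + (1 - mixingWeight a b γ) * y := by
  have hab : a < b := haγ.trans_le hγb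
  calc γ = mixingWeight a b γ * a + (1 - mixingWeight a b γ) * b :=
        (mixingWeight_mul_add hab.ne).symm
    _ ≤ _ := convex_combo_le_convex_combo (mixingWeight_nonneg hγb hab)
        (mixingWeight_le_one haγ hγb) hax hby

end MixingWeight

lemma exists_first_le_of_exists {α : Type*} [LinearOrder α] {H : ℕ} {γ : α} {L : ℕ → α}
    (h : ∃ n ≤ H, γ ≤ L n) : ∃ hk ≤ H, γ ≤ L hk ∧ ∀ h0 < hk, L h0 < γ := by
  classical
  obtain ⟨hkH, hkγ⟩ := Nat.find_spec h
  refine ⟨Nat.find h, hkH, hkγ, fun h0 hlt => ?_⟩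
  exact not_le.mp fun hγ => Nat.find_min h hlt ⟨hlt.le.trans hkH, hγ⟩

/-- safety of every executed policy of StepMix. Given valid LCBs
`L h0 ≤ Vtrue h0` for the candidate policies `π^{k,h0}` (`h0 = 0, …, H`, where the
candidate `H` is the safe baseline, so `γ ≤ Vtrue H`), the executed policy — the baseline
(when no LCB clears `γ`), the optimistic policy (when `h^k = 0`), or the one-step mixture
with `ρ = (L h^k − γ)/(L h^k − L (h^k − 1))`, whose value is the corresponding convex
combination of true values — satisfies `V_1^{π^k} ≥ γ`. -/
theorem stmt19 (H : ℕ) (γ : ℝ) (Vtrue L : ℕ → ℝ)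
    (hLCB : ∀ h0 ≤ H, L h0 ≤ Vtrue h0)
    (hbase : γ ≤ Vtrue H)
    (Vexec : ℝ)
    (hcase1 : (∀ h0 ≤ H, L h0 < γ) → Vexec = Vtrue H)
    (hcase2 : ∀ hk ≤ H, γ ≤ L hk → (∀ h0 < hk, L h0 < γ) →
        (hk = 0 → Vexec = Vtrue 0) ∧
        (hk ≠ 0 →
          Vexec = ((L hk - γ) / (L hk - L (hk - 1))) * Vtrue (hk - 1)
            + (1 - (L hk - γ) / (L hk - L (hk - 1))) * Vtrue hk)) :
    γ ≤ Vexec := by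
  by_cases hnone : ∀ h0 ≤ H, L h0 < γ
  · exact hcase1 hnone ▸ hbase
  push Not at hnone
  obtain ⟨hk, hkH, hkγ, hmin⟩ := exists_first_le_of_exists hnone
  obtain ⟨hopt, hmix⟩ := hcase2 hk hkH hkγ hmin
  rcases Nat.eq_zero_or_pos hk with rfl | hpos
  · exact hopt rfl ▸ hkγ.trans (hLCB 0 hkH)
  · rw [hmix hpos.ne']
    exact le_mixingWeight_mul_add (hmin _ (Nat.sub_lt hpos one_pos)) hkγ
      (hLCB _ ((Nat.sub_le _ _).trans hkH)) (hLCB _ hkH)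
end
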